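/- Assume the lower central series of G intersects trivially (⋂_k Γ_G(k) = 1), and that for each 1 ≤ p ≤ k the joint kernel of the induced maps s_{ij}^{(p)} : ℒ_G(p) → gr^p(𝔍_G) over all 1 ≤ i,j ≤ m is trivial. Then 𝒟_G^m(k) ⊆ 𝒜_G(k). -/

import Mathlib

/-!
If `σ` acts trivially on `𝔍_G/𝔍_G^{k+1}`, then the identity
`ρ(g⁻¹σ(g)) - 1 = ρ(g⁻¹) (ρ(σ(g)) - ρ(g))` shows that every `s_{ij}(g⁻¹σ(g))` lies in `𝔍_G^{k+1}`.
Injectivity of the `s_{ij}^{(p)}` on `ℒ_G(p)` for `p = 1, …, k` then pushes `g⁻¹σ(g)` down the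
lower central series one level at a time, into `Γ_G(k)`.
-/

set_option synthInstance.maxHeartbeats 1000000
set_option maxHeartbeats 1000000
open scoped BigOperators

/-- The set of `SL(m,ℂ)`-representations of a group `G`. -/
abbrev SLRep (G : Type*) [Group G] (m : ℕ) := G →* Matrix.SpecialLinearGroup (Fin m) ℂ

/-- The `(i,j)`-component function `a_{ij}(x)`. -/
noncomputable def afun {G : Type*} [Group G] (m : ℕ) (i j : Fin m) (x : G) :
    SLRep G m → ℂ :=
  fun ρ => ((ρ x : Matrix.SpecialLinearGroup (Fin m) ℂ) : Matrix (Fin m) (Fin m) ℂ) i j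

/-- The `SL(m,ℂ)`-representation algebra `𝔯_ℚ^m(G)`: the ℚ-subalgebra of functions on the
representation variety generated by all component functions. -/
noncomputable def RepAlg (G : Type*) [Group G] (m : ℕ) : Subalgebra ℚ (SLRep G m → ℂ) :=
  Algebra.adjoin ℚ {f | ∃ i j x, f = afun m i j x}

theorem afun_mem {G : Type*} [Group G] (m : ℕ) (i j : Fin m) (x : G) :
    afun m i j x ∈ RepAlg G m :=
  Algebra.subset_adjoin ⟨i, j, x, rfl⟩

/-- `s_{ij}(x) = a_{ij}(x) - δ_{ij}`. -/
noncomputable def sfun {G : Type*} [Group G] (m : ℕ) (i j : Fin m) (x : G) :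
    SLRep G m → ℂ :=
  afun m i j x - if i = j then 1 else 0

theorem sfun_mem {G : Type*} [Group G] (m : ℕ) (i j : Fin m) (x : G) :
    sfun m i j x ∈ RepAlg G m := by
  unfold sfun
  refine sub_mem (afun_mem m i j x) ?_
  split_ifs
  · exact one_mem _
  · exact zero_mem _

/-- `a_{ij}(x)` as an element of the representation algebra. -/
noncomputable def aEl {G : Type*} [Group G] (m : ℕ) (i j : Fin m) (x : G) : RepAlg G m :=
  ⟨afun m i j x, afun_mem m i j x⟩

/-- `s_{ij}(x)` as an element of the representation algebra. -/
noncomputable def sEl {G : Type*} [Group G] (m : ℕ) (i j : Fin m) (x : G) : RepAlg G m :=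
  ⟨sfun m i j x, sfun_mem m i j x⟩

/-- The ideal `𝔍_G` generated by all `s_{ij}(x)`, `x ∈ G`. -/
noncomputable def JId (G : Type*) [Group G] (m : ℕ) : Ideal (RepAlg G m) :=
  Ideal.span {f | ∃ i j x, f = sEl m i j x}

/-- The ideal generated by the `s_{ij}(x_l)` for a generating family `x`. -/
noncomputable def JIdGen {G : Type*} [Group G] (m n : ℕ) (x : Fin n → G) :
    Ideal (RepAlg G m) :=
  Ideal.span {f | ∃ i j l, f = sEl m i j (x l)}

/-- The pullback action of `σ ∈ Aut G` on functions on the representation variety: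
`χ^σ(ρ) = χ(ρ ∘ σ)`. -/
noncomputable def pullback {G : Type*} [Group G] (m : ℕ) (σ : MulAut G) :
    (SLRep G m → ℂ) →ₐ[ℚ] (SLRep G m → ℂ) where
  toFun χ := fun ρ => χ (ρ.comp σ.toMonoidHom)
  map_one' := rfl
  map_mul' _ _ := rfl
  map_zero' := rfl
  map_add' _ _ := rfl
  commutes' _ := rfl

theorem pullback_afun {G : Type*} [Group G] (m : ℕ) (σ : MulAut G) (i j : Fin m) (x : G) :
    pullback m σ (afun m i j x) = afun m i j (σ x) := rfl

theorem pullback_maps {G : Type*} [Group G] (m : ℕ) (σ : MulAut G) :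
    (RepAlg G m).map (pullback m σ) ≤ RepAlg G m := by
  rw [RepAlg, AlgHom.map_adjoin]
  apply Algebra.adjoin_mono
  rintro _ ⟨g, ⟨i, j, x, rfl⟩, rfl⟩
  exact ⟨i, j, σ x, rfl⟩

/-- The action of `Aut G` on the representation algebra. -/
noncomputable def actA {G : Type*} [Group G] (m : ℕ) (σ : MulAut G) :
    RepAlg G m →ₐ[ℚ] RepAlg G m :=
  ((pullback m σ).comp (RepAlg G m).val).codRestrict (RepAlg G m)
    (fun f => pullback_maps m σ ⟨(f : SLRep G m → ℂ), f.2, rfl⟩)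

/-- The filtration `𝒟_G^m(k) = Ker(Aut G → Aut(𝔍_G/𝔍_G^{k+1}))`, described elementwise. -/
noncomputable def Dfil (G : Type*) [Group G] (m k : ℕ) : Set (MulAut G) :=
  {σ | ∀ f ∈ JId G m, actA m σ f - f ∈ JId G m ^ (k + 1)}

theorem actA_sEl {G : Type*} [Group G] (m : ℕ) (σ : MulAut G) (i j : Fin m) (x : G) :
    actA m σ (sEl m i j x) = sEl m i j (σ x) := by
  apply Subtype.ext
  funext ρ
  show sfun m i j x (ρ.comp σ.toMonoidHom) = sfun m i j (σ x) ρ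
  simp only [sfun, Pi.sub_apply]
  split_ifs <;> rfl

theorem sEl_mem_JId {G : Type*} [Group G] (m : ℕ) (i j : Fin m) (x : G) :
    sEl m i j x ∈ JId G m :=
  Ideal.subset_span ⟨i, j, x, rfl⟩

theorem sEl_inv_mul {G : Type*} [Group G] (m : ℕ) (g h : G) (i j : Fin m) :
    sEl m i j (g⁻¹ * h) = ∑ l : Fin m, aEl m i l g⁻¹ * (sEl m l j h - sEl m l j g) := by
  apply Subtype.ext
  funext ρ
  have hmat : ((ρ (g⁻¹ * h) : Matrix (Fin m) (Fin m) ℂ)) - 1 =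
      (ρ g⁻¹ : Matrix (Fin m) (Fin m) ℂ) * ((ρ h : Matrix (Fin m) (Fin m) ℂ) - ρ g) := by
    rw [Matrix.mul_sub, ← Matrix.SpecialLinearGroup.coe_mul, ← Matrix.SpecialLinearGroup.coe_mul,
      ← map_mul, ← map_mul, inv_mul_cancel, map_one, Matrix.SpecialLinearGroup.coe_one]
  have := congrFun (congrFun hmat i) j
  simp only [Matrix.sub_apply, Matrix.one_apply, Matrix.mul_apply] at this
  simpa [sEl, sfun, afun, aEl, Finset.sum_apply, apply_ite (fun f : SLRep G m → ℂ => f ρ)]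
    using this

theorem sEl_inv_mul_mem {G : Type*} [Group G] (m : ℕ) (I : Ideal (RepAlg G m)) (g h : G)
    (hgh : ∀ i j : Fin m, sEl m i j h - sEl m i j g ∈ I) (i j : Fin m) :
    sEl m i j (g⁻¹ * h) ∈ I := by
  rw [sEl_inv_mul]
  exact Ideal.sum_mem _ fun l _ => I.mul_mem_left _ (hgh l j)

theorem sEl_inv_mul_mem_of_mem_Dfil {G : Type*} [Group G] (m k : ℕ) {σ : MulAut G}
    (hσ : σ ∈ Dfil G m k) (g : G) (i j : Fin m) :
    sEl m i j (g⁻¹ * σ g) ∈ JId G m ^ (k + 1) :=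
  sEl_inv_mul_mem m _ g (σ g) (fun i j => actA_sEl m σ i j g ▸ hσ _ (sEl_mem_JId m i j g)) i j

theorem mem_lowerCentralSeries_of_sEl_mem {G : Type*} [Group G] (m k : ℕ)
    (hker : ∀ p : ℕ, 1 ≤ p → p ≤ k → ∀ y ∈ (⊤ : Subgroup G).lowerCentralSeries (p - 1),
      (∀ i j : Fin m, sEl m i j y ∈ JId G m ^ (p + 1)) → y ∈ (⊤ : Subgroup G).lowerCentralSeries p)
    {y : G} (hy : ∀ i j : Fin m, sEl m i j y ∈ JId G m ^ (k + 1)) :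
    y ∈ (⊤ : Subgroup G).lowerCentralSeries k := by
  suffices ∀ p ≤ k, y ∈ (⊤ : Subgroup G).lowerCentralSeries p from this k le_rfl
  intro p
  induction p with
  | zero => simp
  | succ q ih =>
    intro hq
    exact hker (q + 1) (Nat.le_add_left 1 q) hq y (ih (by omega)) fun i j =>
      Ideal.pow_le_pow_right (by omega) (hy i j)

theorem D_subset_AJohnson_general {G : Type*} [Group G] (m k : ℕ)
    (hker : ∀ p : ℕ, 1 ≤ p → p ≤ k → ∀ y ∈ (⊤ : Subgroup G).lowerCentralSeries (p - 1),
      (∀ i j : Fin m, sEl m i j y ∈ JId G m ^ (p + 1)) → y ∈ (⊤ : Subgroup G).lowerCentralSeries p) :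
    Dfil G m k ⊆ {σ : MulAut G | ∀ g : G, g⁻¹ * σ g ∈ (⊤ : Subgroup G).lowerCentralSeries k} :=
  fun _ hσ g =>
    mem_lowerCentralSeries_of_sEl_mem m k hker (sEl_inv_mul_mem_of_mem_Dfil m k hσ g)

/-- if the lower central series of `G` intersects trivially and for each
`1 ≤ p ≤ k` the joint kernel of the induced maps `s_{ij}^{(p)} : ℒ_G(p) → gr^p(𝔍_G)` is
trivial, then `𝒟_G^m(k) ⊆ 𝒜_G(k)`. -/
theorem D_subset_AJohnson {G : Type*} [Group G] (m k : ℕ) (hm : 2 ≤ m) (hk : 1 ≤ k)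
    (hres : ∀ g : G, (∀ p : ℕ, g ∈ (⊤ : Subgroup G).lowerCentralSeries p) → g = 1)
    (hker : ∀ p : ℕ, 1 ≤ p → p ≤ k → ∀ y ∈ (⊤ : Subgroup G).lowerCentralSeries (p - 1),
      (∀ i j : Fin m, sEl m i j y ∈ JId G m ^ (p + 1)) → y ∈ (⊤ : Subgroup G).lowerCentralSeries p) :
    Dfil G m k ⊆ {σ : MulAut G | ∀ g : G, g⁻¹ * σ g ∈ (⊤ : Subgroup G).lowerCentralSeries k} :=
  D_subset_AJohnson_general m k hker
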